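/- Suppose N : (sequences) × (sequences) → ℚ satisfies the Caporaso–Harris type recursion N(α, β) = Σ_{k : β_k > 0} k · N(α + e_k, β − e_k) whenever |β| > 1, and the base case N(α, e_k) = k² · M(α + e_k) for a function M depending only on α + β. Then for all α, β with |β| ≥ 1, N(α, β) = I^β · Iβ · (|β|−1)!/β! · M(α + β), where I^β = Π k^{β_k}, Iβ = Σ k·β_k, |β| = Σ β_k, β! = Π (β_k!). -/

import Mathlib

open Finsupp

/-- `|β| = Σ β_k`. -/
def absSum (β : ℕ+ →₀ ℕ) : ℕ := β.sum fun _ n => n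

/-- `Iβ = Σ k·β_k`. -/
def wtSum (β : ℕ+ →₀ ℕ) : ℕ := β.sum fun k n => (k : ℕ) * n

/-- `I^β = Π k^{β_k}`. -/
def wtProd (β : ℕ+ →₀ ℕ) : ℕ := β.prod fun k n => (k : ℕ) ^ n

/-- `β! = Π β_k!`. -/
def factProd (β : ℕ+ →₀ ℕ) : ℕ := β.prod fun _ n => n.factorial

/-!
The closed form `c(β) · M(α + β)`, with `c(β) = I^β · Iβ · (|β|−1)!/β!`, obeys the same recursion.
Removing one part `k` from `β` divides `I^β` by `k` and `β!` by `β_k` and lowers `Iβ` by `k`, so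
`Σ_k k · c(β − e_k) = I^β (|β|−2)!/β! · Σ_k β_k (Iβ − k) = I^β (|β|−2)!/β! · Iβ (|β|−1) = c(β)`.
Induction on `|β|`, starting from the base case `|β| = 1`, then identifies `N` with the closed form.
-/

theorem absSum_add (β γ : ℕ+ →₀ ℕ) : absSum (β + γ) = absSum β + absSum γ :=
  sum_add_index' (fun _ => rfl) fun _ _ _ => rfl

theorem wtSum_add (β γ : ℕ+ →₀ ℕ) : wtSum (β + γ) = wtSum β + wtSum γ :=
  sum_add_index' (fun _ => mul_zero _) fun _ _ _ => mul_add _ _ _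

theorem wtProd_add (β γ : ℕ+ →₀ ℕ) : wtProd (β + γ) = wtProd β * wtProd γ :=
  prod_add_index' (fun _ => pow_zero _) fun _ _ _ => pow_add _ _ _

theorem absSum_single (k : ℕ+) (n : ℕ) : absSum (single k n) = n :=
  sum_single_index rfl

theorem wtSum_single (k : ℕ+) (n : ℕ) : wtSum (single k n) = k * n :=
  sum_single_index (mul_zero _)

theorem wtProd_single (k : ℕ+) (n : ℕ) : wtProd (single k n) = (k : ℕ) ^ n :=
  prod_single_index (pow_zero _)

theorem factProd_add_single (γ : ℕ+ →₀ ℕ) (k : ℕ+) :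
    factProd (γ + single k 1) = (γ k + 1) * factProd γ := by
  unfold factProd
  rw [← mul_prod_erase' _ k _ fun _ => Nat.factorial_zero,
    ← mul_prod_erase' γ k _ fun _ => Nat.factorial_zero, erase_add, erase_single, add_zero,
    Finsupp.add_apply, single_eq_same, Nat.factorial_succ, mul_assoc]

theorem factProd_ne_zero (β : ℕ+ →₀ ℕ) : factProd β ≠ 0 :=
  Finset.prod_ne_zero_iff.mpr fun _ _ => Nat.factorial_ne_zero _

theorem eq_single_of_absSum_eq_one {β : ℕ+ →₀ ℕ} (hβ : absSum β = 1) :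
    ∃ k, β = single k 1 := by
  obtain ⟨k, hk⟩ := Multiset.card_eq_one.mp ((card_toMultiset β).trans hβ)
  classical
  exact ⟨k, by rw [← Multiset.toFinsupp_singleton, ← toMultiset_eq_iff, hk]⟩

theorem sub_single_add_single {β : ℕ+ →₀ ℕ} {k : ℕ+} (hk : k ∈ β.support) :
    β - single k 1 + single k 1 = β :=
  tsub_add_cancel_of_le (single_le_iff.mpr (Nat.one_le_iff_ne_zero.mpr (mem_support_iff.mp hk)))

theorem absSum_sub_single_add_one {β : ℕ+ →₀ ℕ} {k : ℕ+} (hk : k ∈ β.support) :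
    absSum (β - single k 1) + 1 = absSum β := by
  conv_rhs => rw [← sub_single_add_single hk, absSum_add, absSum_single]

def closedCoeff (β : ℕ+ →₀ ℕ) : ℚ :=
  (wtProd β : ℚ) * (wtSum β : ℚ) * ((absSum β - 1).factorial : ℚ) / (factProd β : ℚ)

theorem closedCoeff_single (k : ℕ+) : closedCoeff (single k 1) = (k : ℚ) ^ 2 := by
  simp [closedCoeff, absSum_single, wtSum_single, wtProd_single, factProd, sq]

-- A summand of the recursion, written through `β = γ + e_k`.
theorem mul_closedCoeff (γ : ℕ+ →₀ ℕ) (k : ℕ+) :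
    (k : ℚ) * closedCoeff γ = wtProd (γ + single k 1) * (absSum γ - 1).factorial /
      factProd (γ + single k 1) *
        (((γ + single k 1 : ℕ+ →₀ ℕ) k : ℚ) * (wtSum (γ + single k 1) - k)) := by
  have hfact : (factProd γ : ℚ) ≠ 0 := Nat.cast_ne_zero.mpr (factProd_ne_zero γ)
  rw [wtProd_add, wtSum_add, factProd_add_single, wtProd_single, wtSum_single, Finsupp.add_apply,
    single_eq_same, closedCoeff]
  push_cast
  field_simp
  ring

theorem sum_support_mul_wtSum_sub (β : ℕ+ →₀ ℕ) :
    ∑ k ∈ β.support, (β k : ℚ) * (wtSum β - k) = wtSum β * (absSum β - 1) := by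
  have habs : (absSum β : ℚ) = ∑ k ∈ β.support, (β k : ℚ) := by
    simp [absSum, Finsupp.sum]
  have hwt : (wtSum β : ℚ) = ∑ k ∈ β.support, (k : ℚ) * β k := by
    simp [wtSum, Finsupp.sum]
  calc ∑ k ∈ β.support, (β k : ℚ) * (wtSum β - k)
      = (wtSum β : ℚ) * ∑ k ∈ β.support, (β k : ℚ) - ∑ k ∈ β.support, (k : ℚ) * β k := by
        rw [Finset.mul_sum, ← Finset.sum_sub_distrib]
        exact Finset.sum_congr rfl fun _ _ => by ring
    _ = wtSum β * (absSum β - 1) := by rw [← habs, ← hwt]; ring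

theorem closedCoeff_eq_sum (β : ℕ+ →₀ ℕ) (hβ : 1 < absSum β) :
    closedCoeff β = ∑ k ∈ β.support, (k : ℚ) * closedCoeff (β - single k 1) := by
  obtain ⟨m, hm⟩ : ∃ m, absSum β = m + 2 := ⟨absSum β - 2, by omega⟩
  have hterm : ∀ k ∈ β.support, (k : ℚ) * closedCoeff (β - single k 1) =
      wtProd β * m.factorial / factProd β * ((β k : ℚ) * (wtSum β - k)) := by
    intro k hk
    have hγabs : absSum (β - single k 1) = m + 1 := by
      have := absSum_sub_single_add_one hk
      omega
    rw [mul_closedCoeff, sub_single_add_single hk, hγabs, Nat.add_sub_cancel]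
  rw [Finset.sum_congr rfl hterm, ← Finset.mul_sum, sum_support_mul_wtSum_sub, closedCoeff, hm,
    show m + 2 - 1 = m + 1 by omega, Nat.factorial_succ]
  push_cast
  ring

/-- If `N` satisfies the Caporaso–Harris type recursion
`N(α,β) = Σ_{k : β_k > 0} k·N(α+e_k, β−e_k)` for `|β| > 1`, and the base case
`N(α, e_k) = k²·M(α+e_k)`, then `N(α,β) = I^β · Iβ · (|β|−1)!/β! · M(α+β)`
whenever `|β| ≥ 1`. -/
theorem stmt_1 (N : (ℕ+ →₀ ℕ) × (ℕ+ →₀ ℕ) → ℚ) (M : (ℕ+ →₀ ℕ) → ℚ)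
    (hrec : ∀ α β : ℕ+ →₀ ℕ, 1 < absSum β →
      N (α, β) = ∑ k ∈ β.support,
        (k : ℚ) * N (α + Finsupp.single k 1, β - Finsupp.single k 1))
    (hbase : ∀ (α : ℕ+ →₀ ℕ) (k : ℕ+),
      N (α, Finsupp.single k 1) = (k : ℚ) ^ 2 * M (α + Finsupp.single k 1)) :
    ∀ α β : ℕ+ →₀ ℕ, 1 ≤ absSum β →
      N (α, β) = (wtProd β : ℚ) * (wtSum β : ℚ) *
        ((absSum β - 1).factorial : ℚ) / (factProd β : ℚ) * M (α + β) := by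
  suffices h : ∀ n α β, absSum β = n + 1 → N (α, β) = closedCoeff β * M (α + β) from
    fun α β hβ => h _ α β (Nat.succ_pred_eq_of_pos hβ).symm
  intro n
  induction n with
  | zero =>
    intro α β hβ
    obtain ⟨k, rfl⟩ := eq_single_of_absSum_eq_one hβ
    rw [hbase, closedCoeff_single]
  | succ n ih =>
    intro α β hβ
    rw [hrec α β (by omega), closedCoeff_eq_sum β (by omega), Finset.sum_mul]
    refine Finset.sum_congr rfl fun k hk => ?_
    have hγabs : absSum (β - single k 1) = n + 1 := by
      have := absSum_sub_single_add_one hk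
      omega
    rw [ih _ _ hγabs, add_assoc, add_comm (single k 1), sub_single_add_single hk, mul_assoc]
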